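/- arXiv:2103.06072 — 2 statements merged into one kernel-verified Lean document; each statement's English description precedes it below -/
import Mathlib

section
/- For a vain set Ω ⊂ ℝⁿ, the negative distance function to the boundary, x ↦ -dist(x, ∂Ω), defined on Ω, is a vain function. Equivalently, dist(x_λ, ∂Ω) ≥ dist(x, ∂Ω) for all x ∈ Ω and λ ∈ [-1,1]. -/
/-!
A point `z` is `w_μ` for some `|μ| ≤ 1` exactly when `z` agrees with `w` off the first
coordinate and `|z 0| ≤ |w 0|`, so vainness of `Ω` says that `Ωᶜ` is closed under enlarging
`|w 0|`. Given `z ∉ Ω`, replacing `z 0` by a number `b` with `|b| ≥ |z 0|` as close as possible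
to `x 0` gives a point `w ∉ Ω` with `|w 0 - x 0| = max 0 (|z 0| - |x 0|) ≤ |z 0 - λ x 0|`,
hence `dist x w ≤ dist x_λ z`. Thus the distance to `Ωᶜ` cannot decrease under `x ↦ x_λ`,
and for `x ∈ Ω` the distance to `Ωᶜ` is the distance to `∂Ω`.
-/

noncomputable section

def scale1E {n : ℕ} (lam : ℝ) (x : EuclideanSpace ℝ (Fin (n+1))) :
    EuclideanSpace ℝ (Fin (n+1)) :=
  WithLp.toLp 2 (Function.update x 0 (lam * x 0))

def VainSetE {n : ℕ} (Ω : Set (EuclideanSpace ℝ (Fin (n+1)))) : Prop :=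
  ∀ x ∈ Ω, ∀ lam ∈ Set.Icc (-1 : ℝ) 1, scale1E lam x ∈ Ω

open Metric Set

theorem EuclideanSpace.dist_le_dist_of_abs_sub_le {ι : Type*} [Fintype ι]
    {a b c d : EuclideanSpace ℝ ι} (h : ∀ i, |a i - b i| ≤ |c i - d i|) :
    dist a b ≤ dist c d := by
  rw [EuclideanSpace.dist_eq, EuclideanSpace.dist_eq]
  gcongr with i
  simpa only [Real.dist_eq] using h i

theorem Metric.infDist_compl_le_infDist_frontier {X : Type*} [PseudoMetricSpace X] {s : Set X}
    (hs : (frontier s).Nonempty) (x : X) : infDist x sᶜ ≤ infDist x (frontier s) := by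
  rw [← infDist_closure]
  exact infDist_le_infDist_of_subset (frontier_compl s ▸ frontier_subset_closure) hs

theorem exists_mul_eq_abs_sub_le {a c lam : ℝ} (hlam : lam ∈ Icc (-1 : ℝ) 1) :
    ∃ b, ∃ μ ∈ Icc (-1 : ℝ) 1, μ * b = c ∧ |b - a| ≤ |c - lam * a| := by
  set m := max |a| |c|
  set b := if 0 ≤ a then m else -m
  have hb : |b| = m := by
    simp only [b]
    split_ifs <;> simp [m]
  have hcb : |c| ≤ |b| := hb ▸ le_max_right _ _
  have hba : |b - a| = m - |a| := by
    simp only [b]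
    split_ifs with ha
    · have habs : |a| = a := abs_of_nonneg ha
      rw [habs, abs_of_nonneg (by linarith [le_max_left |a| |c|])]
    · have habs : |a| = -a := abs_of_neg (not_le.1 ha)
      rw [habs, abs_of_nonpos (by linarith [le_max_left |a| |c|])]
      ring
  have hlam_a : |lam * a| ≤ |a| := by
    rw [abs_mul]
    exact mul_le_of_le_one_left (abs_nonneg a) (abs_le.2 hlam)
  refine ⟨b, c / b, abs_le.1 ?_, ?_, ?_⟩
  · rw [abs_div]
    exact div_le_one_of_le₀ hcb (abs_nonneg b)
  · rcases eq_or_ne b 0 with h0 | h0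
    · simpa [h0, eq_comm] using hcb
    · exact div_mul_cancel₀ c h0
  · rw [hba, sub_le_iff_le_add]
    refine max_le ?_ ?_ <;> linarith [abs_nonneg (c - lam * a), abs_sub_abs_le_abs_sub c (lam * a)]

theorem exists_scale1E_eq_dist_le {n : ℕ} (x z : EuclideanSpace ℝ (Fin (n+1))) {lam : ℝ}
    (hlam : lam ∈ Icc (-1 : ℝ) 1) :
    ∃ w, ∃ μ ∈ Icc (-1 : ℝ) 1, scale1E μ w = z ∧ dist w x ≤ dist z (scale1E lam x) := by
  obtain ⟨b, μ, hμ, hμb, hb⟩ := exists_mul_eq_abs_sub_le (a := x 0) (c := z 0) hlam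
  refine ⟨WithLp.toLp 2 (Function.update z 0 b), μ, hμ, ?_, ?_⟩
  · ext i
    rcases eq_or_ne i 0 with rfl | hi
    · simp [scale1E, hμb]
    · simp [scale1E, Function.update_of_ne hi]
  · refine EuclideanSpace.dist_le_dist_of_abs_sub_le fun i => ?_
    rcases eq_or_ne i 0 with rfl | hi
    · simpa [scale1E] using hb
    · simp [scale1E, Function.update_of_ne hi]

theorem VainSetE.infDist_compl_le_infDist_scale1E {n : ℕ} {Ω : Set (EuclideanSpace ℝ (Fin (n+1)))}
    (hΩ : VainSetE Ω) (x : EuclideanSpace ℝ (Fin (n+1))) {lam : ℝ} (hlam : lam ∈ Icc (-1 : ℝ) 1) :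
    infDist x Ωᶜ ≤ infDist (scale1E lam x) Ωᶜ := by
  rcases Ωᶜ.eq_empty_or_nonempty with hempty | hne
  · simp [hempty]
  refine (le_infDist hne).2 fun z hz => ?_
  obtain ⟨w, μ, hμ, rfl, hw⟩ := exists_scale1E_eq_dist_le x z hlam
  have hwΩ : w ∈ Ωᶜ := fun hw => hz (hΩ w hw μ hμ)
  calc infDist x Ωᶜ ≤ dist x w := infDist_le_dist_of_mem hwΩ
    _ ≤ dist (scale1E lam x) (scale1E μ w) := by
      rw [dist_comm, dist_comm (scale1E lam x)]
      exact hw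

theorem vain_neg_dist_to_boundary {n : ℕ} (Ω : Set (EuclideanSpace ℝ (Fin (n+1))))
    (hΩ : VainSetE Ω) :
    ∀ x ∈ Ω, ∀ lam ∈ Set.Icc (-1 : ℝ) 1,
      Metric.infDist x (frontier Ω) ≤ Metric.infDist (scale1E lam x) (frontier Ω) := by
  intro x hx lam hlam
  rcases eq_or_ne Ω univ with rfl | hU
  · simp
  obtain ⟨y, hy, hxy⟩ := exists_mem_frontier_infDist_compl_eq_dist hx hU
  calc infDist x (frontier Ω) ≤ dist x y := infDist_le_dist_of_mem hy
    _ = infDist x Ωᶜ := hxy.symm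
    _ ≤ infDist (scale1E lam x) Ωᶜ := hΩ.infDist_compl_le_infDist_scale1E x hlam
    _ ≤ infDist (scale1E lam x) (frontier Ω) := infDist_compl_le_infDist_frontier ⟨y, hy⟩ _
end
end

section
/- There exists a vain function u : ℝ → ℝ and a probability measure μ on ℝ (a symmetric discrete kernel) such that the convolution x ↦ ∫ u(x - y) dμ(y) is not vain. Concretely, for u(x) = √|x| and μ = ½(δ_ε + δ_{-ε}) with ε > 0, the convolution v(x) = ½(√|x-ε| + √|x+ε|) is not vain. -/
/-!
A vain function attains its minimum at `0`. Averaging `√|·|` over `±ε` gives `v 0 = √ε` but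
`v ε = √(2ε) / 2 = √ε / √2 < v 0`: the concave cusp at the origin is smeared out
into a dip.
-/

noncomputable section

/-- Vain function on all of `ℝ`: `u (lam * x) ≤ u x` for `lam ∈ [-1,1]`. -/
def Vain1 (u : ℝ → ℝ) : Prop :=
  ∀ x : ℝ, ∀ lam ∈ Set.Icc (-1 : ℝ) 1, u (lam * x) ≤ u x

theorem vain1_comp_abs {f : ℝ → ℝ} (hf : MonotoneOn f (Set.Ici 0)) :
    Vain1 (fun x => f |x|) := by
  intro x lam hlam
  refine hf (Set.mem_Ici.mpr (abs_nonneg _)) (Set.mem_Ici.mpr (abs_nonneg _)) ?_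
  rw [abs_mul]
  exact mul_le_of_le_one_left (abs_nonneg x) (abs_le.mpr hlam)

theorem Vain1.apply_zero_le {u : ℝ → ℝ} (hu : Vain1 u) (x : ℝ) : u 0 ≤ u x := by
  simpa using hu x 0 ⟨by norm_num, by norm_num⟩

theorem not_vain1_of_lt_apply_zero {u : ℝ → ℝ} {x : ℝ} (hx : u x < u 0) : ¬ Vain1 u :=
  fun hu => (hu.apply_zero_le x).not_gt hx

theorem sqrt_add_self_lt_two_mul_sqrt {ε : ℝ} (hε : 0 < ε) : √(ε + ε) < 2 * √ε := by
  have h2 : √2 < 2 := by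
    rw [Real.sqrt_lt' two_pos]
    norm_num
  calc √(ε + ε) = √2 * √ε := by rw [← two_mul, Real.sqrt_mul zero_le_two]
    _ < 2 * √ε := mul_lt_mul_of_pos_right h2 (Real.sqrt_pos.mpr hε)

theorem convolution_of_vain_not_vain (ε : ℝ) (hε : 0 < ε) :
    Vain1 (fun x => Real.sqrt |x|) ∧
      ¬ Vain1 (fun x => (Real.sqrt |x - ε| + Real.sqrt |x + ε|) / 2) := by
  refine ⟨vain1_comp_abs (Real.sqrt_monotone.monotoneOn _),
    not_vain1_of_lt_apply_zero (x := ε) ?_⟩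
  have hsqrt := sqrt_add_self_lt_two_mul_sqrt hε
  simp only [sub_self, abs_zero, Real.sqrt_zero, zero_sub, zero_add, abs_neg, abs_of_pos hε,
    abs_of_pos (add_pos hε hε)]
  linarith
end
end
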